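/- Let {E_k}_{k=1,…,M} be positive semidefinite operators on ℂ^D with Σ_k E_k = 1 (a POVM), and consider the 'rawest' implementation with transformation operators A_k = √E_k (the positive semidefinite square root of E_k). Then for every density matrix ρ on ℂ^D, the eigenvalue vector of Σ_k √E_k ρ √E_k is majorized by the eigenvalue vector of ρ: λ(Σ_k √E_k ρ √E_k) ≺ λ(ρ). -/

import Mathlib

/-!
The map `Φ X = ∑ₖ √Eₖ X √Eₖ` is trace preserving, unital and self-adjoint for the pairing
`(Q, X) ↦ tr (Q X)`. If `P` is the spectral projection of `Φ ρ` onto the eigenvalues indexed by `S`,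
then `∑_{i ∈ S} λᵢ(Φ ρ) = tr (P Φ(ρ)) = tr (Φ(P) ρ)`, where `0 ≤ Φ P ≤ 1` and `tr (Φ P) = #S`.
In an eigenbasis of `ρ`, `tr (Φ(P) ρ) = ∑ᵢ tᵢ λᵢ(ρ)` with weights `0 ≤ tᵢ ≤ 1` summing to `#S`,
and such a weighted sum is at most the sum of the `#S` largest eigenvalues of `ρ`.
-/

open Matrix BigOperators
open scoped ComplexOrder

/-- The sum of the `k` largest entries of `x`, expressed as the supremum of the
sums of `x` over all subsets of cardinality `k`. -/
noncomputable def kMaxSum {D : ℕ} (x : Fin D → ℝ) (k : ℕ) : ℝ :=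
  sSup ((fun A : Finset (Fin D) => ∑ i ∈ A, x i) '' {A : Finset (Fin D) | A.card = k})

/-- `x` is majorized by `y` (`x ≺ y`): every partial sum of the `k` largest
entries of `x` is at most the corresponding sum for `y`, and the total sums
coincide. -/
def MajorizedBy {D : ℕ} (x y : Fin D → ℝ) : Prop :=
  (∀ k, k ≤ D → kMaxSum x k ≤ kMaxSum y k) ∧ (∑ i, x i = ∑ i, y i)

/-- The positive semidefinite square root of a positive semidefinite matrix, as defined
in the older Mathlib (`Matrix.PosSemidef.sqrt`). -/
noncomputable def Matrix.PosSemidef.sqrt {n 𝕜 : Type*} [Fintype n] [DecidableEq n] [RCLike 𝕜]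
    {A : Matrix n n 𝕜} (hA : A.PosSemidef) : Matrix n n 𝕜 :=
  hA.1.eigenvectorUnitary.1 * diagonal ((↑) ∘ (Real.sqrt ∘ hA.1.eigenvalues)) *
    (star hA.1.eigenvectorUnitary : Matrix n n 𝕜)

namespace Matrix.PosSemidef

variable {n 𝕜 : Type*} [Fintype n] [DecidableEq n] [RCLike 𝕜] {A : Matrix n n 𝕜}

lemma isHermitian_sqrt (hA : A.PosSemidef) : hA.sqrt.IsHermitian := by
  simp only [IsHermitian, sqrt, conjTranspose_mul, star_eq_conjTranspose,
    conjTranspose_conjTranspose, diagonal_conjTranspose, mul_assoc]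
  congr 3
  funext i
  simp

lemma sqrt_mul_sqrt (hA : A.PosSemidef) : hA.sqrt * hA.sqrt = A := by
  have hUU : star (hA.1.eigenvectorUnitary : Matrix n n 𝕜) * hA.1.eigenvectorUnitary = 1 :=
    Unitary.coe_star_mul_self _
  conv_rhs => rw [hA.1.spectral_theorem, Unitary.conjStarAlgAut_apply]
  rw [sqrt]
  simp only [mul_assoc]
  rw [← mul_assoc (star _) (hA.1.eigenvectorUnitary : Matrix n n 𝕜), hUU, one_mul,
    ← mul_assoc (diagonal _), diagonal_mul_diagonal]
  congr 3
  funext i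
  simp only [Function.comp, ← RCLike.ofReal_mul, Real.mul_self_sqrt (hA.eigenvalues_nonneg i)]

end Matrix.PosSemidef

section Majorization

variable {ι : Type*} [Fintype ι]

lemma exists_card_eq_forall_le_of_notMem_of_mem (x : ι → ℝ) {k : ℕ} (hk : k ≤ Fintype.card ι) :
    ∃ S : Finset ι, S.card = k ∧ ∀ i ∈ S, ∀ j ∉ S, x j ≤ x i := by
  classical
  obtain ⟨S, hS, hSmax⟩ := Finset.exists_max_image
    (Finset.univ.powersetCard k) (fun S => ∑ i ∈ S, x i) (Finset.powersetCard_nonempty.2 hk)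
  rw [Finset.mem_powersetCard_univ] at hS
  refine ⟨S, hS, fun i hi j hj => ?_⟩
  have hj' : j ∉ S.erase i := fun h => hj (Finset.mem_of_mem_erase h)
  have hswap := hSmax (insert j (S.erase i)) <| Finset.mem_powersetCard_univ.2 <| by
    rw [Finset.card_insert_of_notMem hj', Finset.card_erase_of_mem hi, hS]
    have := Finset.card_pos.2 ⟨i, hi⟩
    omega
  rw [Finset.sum_insert hj', ← Finset.add_sum_erase S x hi] at hswap
  linarith

lemma sum_mul_le_sum_of_forall_le {t x : ι → ℝ} {S : Finset ι} {c : ℝ}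
    (ht0 : ∀ i, 0 ≤ t i) (ht1 : ∀ i, t i ≤ 1) (hts : ∑ i, t i = S.card)
    (hS : ∀ i ∈ S, c ≤ x i) (hSc : ∀ i ∉ S, x i ≤ c) :
    ∑ i, t i * x i ≤ ∑ i ∈ S, x i := by
  classical
  have hterm : ∀ i, (t i - if i ∈ S then 1 else 0) * (x i - c) ≤ 0 := by
    intro i
    by_cases hi : i ∈ S
    · simp only [hi, if_true]
      exact mul_nonpos_of_nonpos_of_nonneg (by linarith [ht1 i]) (by linarith [hS i hi])
    · simp only [hi, if_false, sub_zero]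
      exact mul_nonpos_of_nonneg_of_nonpos (ht0 i) (by linarith [hSc i hi])
  have hexpand : ∑ i, (t i - if i ∈ S then 1 else 0) * (x i - c) =
      ∑ i, t i * x i - ∑ i ∈ S, x i := by
    simp only [sub_mul, mul_sub, ite_mul, one_mul, zero_mul, Finset.sum_sub_distrib,
      ← Finset.sum_mul, hts, Finset.sum_ite_mem, Finset.univ_inter, Finset.sum_const, nsmul_eq_mul]
    ring
  linarith [Finset.sum_nonpos fun i (_ : i ∈ Finset.univ) => hterm i]

variable {D : ℕ}

lemma kMaxSum_le {x : Fin D → ℝ} {k : ℕ} {c : ℝ} (hk : k ≤ D)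
    (h : ∀ S : Finset (Fin D), S.card = k → ∑ i ∈ S, x i ≤ c) : kMaxSum x k ≤ c := by
  obtain ⟨T, -, hT⟩ := (Finset.univ : Finset (Fin D)).exists_subset_card_eq (by simpa using hk)
  refine csSup_le ⟨_, T, hT, rfl⟩ ?_
  rintro - ⟨S, hS, rfl⟩
  exact h S hS

lemma sum_le_kMaxSum (x : Fin D → ℝ) (S : Finset (Fin D)) : ∑ i ∈ S, x i ≤ kMaxSum x S.card :=
  le_csSup ((Set.toFinite _).image _).bddAbove ⟨S, rfl, rfl⟩

lemma sum_mul_le_kMaxSum {t x : Fin D → ℝ} {k : ℕ} (hk : k ≤ D)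
    (ht0 : ∀ i, 0 ≤ t i) (ht1 : ∀ i, t i ≤ 1) (hts : ∑ i, t i = k) :
    ∑ i, t i * x i ≤ kMaxSum x k := by
  obtain ⟨S, rfl, hS⟩ := exists_card_eq_forall_le_of_notMem_of_mem x (by simpa using hk)
  refine le_trans ?_ (sum_le_kMaxSum x S)
  rcases S.eq_empty_or_nonempty with rfl | hne
  · exact sum_mul_le_sum_of_forall_le (c := ∑ j, |x j|) ht0 ht1 hts (by simp)
      fun j _ => (le_abs_self _).trans (Finset.single_le_sum (fun j _ => abs_nonneg (x j))
        (Finset.mem_univ j))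
  · obtain ⟨i₀, hi₀, hmin⟩ := S.exists_min_image x hne
    exact sum_mul_le_sum_of_forall_le ht0 ht1 hts hmin fun j hj => hS i₀ hi₀ j hj

end Majorization

namespace Matrix.IsHermitian

variable {n 𝕜 : Type*} [Fintype n] [DecidableEq n] [RCLike 𝕜] {A : Matrix n n 𝕜}

lemma trace_mul_eq_sum_diag_mul_eigenvalues (hA : A.IsHermitian) (Q : Matrix n n 𝕜) :
    (Q * A).trace = ∑ i, (star (hA.eigenvectorUnitary : Matrix n n 𝕜) * Q *
      hA.eigenvectorUnitary) i i * hA.eigenvalues i := by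
  conv_lhs => rw [hA.spectral_theorem, Unitary.conjStarAlgAut_apply, ← mul_assoc, trace_mul_comm,
    ← mul_assoc, ← mul_assoc]
  simp [trace, mul_diagonal]

lemma exists_trace_mul_eq_sum_eigenvalues (hA : A.IsHermitian) (S : Finset n) :
    ∃ P : Matrix n n 𝕜, P.PosSemidef ∧ (1 - P).PosSemidef ∧ P.trace = S.card ∧
      (P * A).trace = ∑ i ∈ S, (hA.eigenvalues i : 𝕜) := by
  classical
  set U : Matrix n n 𝕜 := (hA.eigenvectorUnitary : Matrix n n 𝕜)
  have hUU : star U * U = 1 := Unitary.coe_star_mul_self _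
  have hUU' : U * star U = 1 := Unitary.coe_mul_star_self _
  set χ : n → 𝕜 := fun i => if i ∈ S then 1 else 0
  have hconj : ∀ d : n → 𝕜, (∀ i, 0 ≤ d i) → (U * diagonal d * star U).PosSemidef := fun d hd => by
    simpa [star_eq_conjTranspose] using (posSemidef_diagonal_iff.2 hd).mul_mul_conjTranspose_same U
  have hχ : ∀ i, 0 ≤ χ i ∧ χ i ≤ 1 := fun i => by by_cases hi : i ∈ S <;> simp [χ, hi]
  refine ⟨U * diagonal χ * star U, hconj χ fun i => (hχ i).1, ?_, ?_, ?_⟩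
  · rw [show 1 - U * diagonal χ * star U = U * diagonal (1 - χ) * star U by
      rw [show diagonal (1 - χ) = 1 - diagonal χ from (diagonal_sub 1 χ).symm,
        mul_sub, sub_mul, mul_one, hUU']]
    exact hconj _ fun i => sub_nonneg.2 (hχ i).2
  · rw [trace_mul_comm, ← mul_assoc, hUU, one_mul, trace_diagonal]
    simp [χ]
  · rw [hA.trace_mul_eq_sum_diag_mul_eigenvalues, ← mul_assoc, ← mul_assoc, hUU, one_mul, mul_assoc,
      hUU, mul_one]
    simp [χ, Finset.sum_ite_mem]

end Matrix.IsHermitian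

lemma Matrix.IsHermitian.re_trace_mul_le_kMaxSum {D : ℕ} {𝕜 : Type*} [RCLike 𝕜]
    {A Q : Matrix (Fin D) (Fin D) 𝕜} (hA : A.IsHermitian) (hQ : Q.PosSemidef)
    (hQ1 : (1 - Q).PosSemidef) {k : ℕ} (hk : k ≤ D) (htr : Q.trace = k) :
    RCLike.re (Q * A).trace ≤ kMaxSum hA.eigenvalues k := by
  set U : Matrix (Fin D) (Fin D) 𝕜 := (hA.eigenvectorUnitary : Matrix (Fin D) (Fin D) 𝕜)
  have hUU : star U * U = 1 := Unitary.coe_star_mul_self _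
  have hUU' : U * star U = 1 := Unitary.coe_mul_star_self _
  have hB : (star U * Q * U).PosSemidef := by
    simpa [star_eq_conjTranspose] using hQ.conjTranspose_mul_mul_same U
  have hB1 : (1 - star U * Q * U).PosSemidef := by
    rw [show 1 - star U * Q * U = star U * (1 - Q) * U by rw [mul_sub, sub_mul, mul_one, hUU]]
    simpa [star_eq_conjTranspose] using hQ1.conjTranspose_mul_mul_same U
  have hre : RCLike.re (Q * A).trace =
      ∑ i, RCLike.re ((star U * Q * U) i i) * hA.eigenvalues i := by
    rw [hA.trace_mul_eq_sum_diag_mul_eigenvalues, map_sum]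
    simp only [RCLike.mul_re, RCLike.ofReal_re, RCLike.ofReal_im, mul_zero, sub_zero]
    rfl
  rw [hre]
  refine sum_mul_le_kMaxSum hk (fun i => (RCLike.nonneg_iff.1 hB.diag_nonneg).1)
    (fun i => by simpa using (RCLike.nonneg_iff.1 (hB1.diag_nonneg (i := i))).1) ?_
  rw [← map_sum]
  change RCLike.re (star U * Q * U).trace = (k : ℝ)
  rw [trace_mul_comm, ← mul_assoc, hUU', one_mul, htr]
  simp

section SelfDualChannel

variable {n ι 𝕜 : Type*} [Fintype n] [Fintype ι] [RCLike 𝕜] (B : ι → Matrix n n 𝕜)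

lemma Matrix.trace_sum_mul_mul_self (X : Matrix n n 𝕜) :
    (∑ k, B k * X * B k).trace = ((∑ k, B k * B k) * X).trace := by
  simp only [trace_sum, Finset.sum_mul]
  refine Finset.sum_congr rfl fun k _ => ?_
  rw [trace_mul_comm, ← mul_assoc]

lemma Matrix.trace_mul_sum_mul_mul_self_comm (Q X : Matrix n n 𝕜) :
    (Q * ∑ k, B k * X * B k).trace = ((∑ k, B k * Q * B k) * X).trace := by
  simp only [Finset.mul_sum, Finset.sum_mul, trace_sum]
  refine Finset.sum_congr rfl fun k _ => ?_
  rw [← mul_assoc, trace_mul_cycle, ← mul_assoc]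

lemma Matrix.PosSemidef.sum_mul_mul_self {B : ι → Matrix n n 𝕜} (hB : ∀ k, (B k).IsHermitian)
    {X : Matrix n n 𝕜} (hX : X.PosSemidef) : (∑ k, B k * X * B k).PosSemidef :=
  posSemidef_sum _ fun k _ => by simpa [(hB k).eq] using hX.conjTranspose_mul_mul_same (B k)

end SelfDualChannel

theorem majorizedBy_eigenvalues_sum_mul_mul_self {D : ℕ} {ι 𝕜 : Type*} [Fintype ι] [RCLike 𝕜]
    {B : ι → Matrix (Fin D) (Fin D) 𝕜} (hB : ∀ k, (B k).IsHermitian)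
    (hBsum : ∑ k, B k * B k = 1) {A : Matrix (Fin D) (Fin D) 𝕜} (hA : A.IsHermitian)
    (hΦA : (∑ k, B k * A * B k).IsHermitian) :
    MajorizedBy hΦA.eigenvalues hA.eigenvalues := by
  refine ⟨fun k hk => kMaxSum_le hk fun S hS => ?_, ?_⟩
  · obtain ⟨P, hP, hP1, hPtr, hPA⟩ := hΦA.exists_trace_mul_eq_sum_eigenvalues S
    have hQ1 : (1 - ∑ j, B j * P * B j).PosSemidef := by
      rw [show 1 - ∑ j, B j * P * B j = ∑ j, B j * (1 - P) * B j by
        simp [mul_sub, sub_mul, Finset.sum_sub_distrib, hBsum]]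
      exact hP1.sum_mul_mul_self hB
    have hQtr : (∑ j, B j * P * B j).trace = k := by
      rw [trace_sum_mul_mul_self, hBsum, one_mul, hPtr, hS]
    calc ∑ i ∈ S, hΦA.eigenvalues i = RCLike.re (P * ∑ j, B j * A * B j).trace := by
          simp [hPA]
      _ = RCLike.re ((∑ j, B j * P * B j) * A).trace := by rw [trace_mul_sum_mul_mul_self_comm]
      _ ≤ kMaxSum hA.eigenvalues k :=
          hA.re_trace_mul_le_kMaxSum (hP.sum_mul_mul_self hB) hQ1 hk hQtr
  · have := hΦA.trace_eq_sum_eigenvalues.symm.trans <|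
      (trace_sum_mul_mul_self B A).trans (by rw [hBsum, one_mul, hA.trace_eq_sum_eigenvalues])
    exact_mod_cast this

theorem rawest_povm_majorization_general {D M : ℕ}
    (E : Fin M → Matrix (Fin D) (Fin D) ℂ)
    (hE : ∀ k, (E k).PosSemidef)
    (hEsum : ∑ k, E k = 1)
    (ρ : Matrix (Fin D) (Fin D) ℂ)
    (hρ : ρ.PosSemidef)
    (hρ2 : (∑ k, Matrix.PosSemidef.sqrt (hE k) * ρ * Matrix.PosSemidef.sqrt (hE k)).IsHermitian) :
    MajorizedBy hρ2.eigenvalues hρ.1.eigenvalues :=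
  majorizedBy_eigenvalues_sum_mul_mul_self (fun k => (hE k).isHermitian_sqrt)
    (by simpa only [PosSemidef.sqrt_mul_sqrt] using hEsum) hρ.1 hρ2

/-- **The `rawest` implementation of a POVM never decreases mixing.**  If
`{E k}` is a POVM (positive semidefinite operators summing to `1`) and the
transformation operators are the positive square roots `√(E k)`, then for
every density matrix `ρ` the output `Σ √(E k) ρ √(E k)` is at least as mixed
as `ρ`. -/
theorem rawest_povm_majorization {D M : ℕ}
    (E : Fin M → Matrix (Fin D) (Fin D) ℂ)
    (hE : ∀ k, (E k).PosSemidef)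
    (hEsum : ∑ k, E k = 1)
    (ρ : Matrix (Fin D) (Fin D) ℂ)
    (hρ : ρ.PosSemidef) (hρtr : ρ.trace = 1)
    (hρ2 : (∑ k, Matrix.PosSemidef.sqrt (hE k) * ρ * Matrix.PosSemidef.sqrt (hE k)).IsHermitian) :
    MajorizedBy hρ2.eigenvalues hρ.1.eigenvalues :=
  rawest_povm_majorization_general E hE hEsum ρ hρ hρ2
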